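/- Let G be a bipanpositionable graph with at least 4 vertices and let a, b, c, d be the vertices of a 4-cycle in G (edges ab, ac, bd, cd). Then W = {a, b, c, d} is path-closed: for every u ∈ W and every positive integer l, if there is a path of length l in G starting at u, then there is a path of length l from u to some vertex of W. -/

import Mathlib

/-- A Hamiltonian bipartite graph `G` is *bipanpositionable* if for any two distinct
vertices `x, y` and any `k` with `dist(x,y) ≤ k ≤ |V(G)|/2` and `k - dist(x,y)` even,
some Hamiltonian cycle `C` of `G` has `dist_C(x,y) = k`; here such a Hamiltonian cycle
is encoded by its two arcs between `x` and `y`: internally disjoint paths of lengths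
`k` and `|V(G)| - k` which together cover all vertices. -/
def Bipanpositionable {V : Type*} [Fintype V] [DecidableEq V] (G : SimpleGraph V) : Prop :=
  G.Colorable 2 ∧ (∃ (a : V) (C : G.Walk a a), C.IsHamiltonianCycle) ∧
  ∀ x y : V, x ≠ y → ∀ k : ℕ, G.dist x y ≤ k → 2 * k ≤ Fintype.card V →
    Even (k - G.dist x y) →
    ∃ p q : G.Walk x y, p.IsPath ∧ q.IsPath ∧
      p.length = k ∧ q.length = Fintype.card V - k ∧
      (∀ v : V, v ∈ p.support ∨ v ∈ q.support) ∧
      (∀ v : V, v ∈ p.support → v ∈ q.support → v = x ∨ v = y)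

/-!
In a bipartite graph a path from `u` has even length exactly when it ends in the colour class of
`u`. Every vertex `u` of the 4-cycle has a neighbour `w₁` and a vertex `w₂` at distance two on
it, so a path of odd length `l` is sought from `u` to `w₁` and one of even length from `u` to
`w₂`. Bipanpositionability provides both for every `l < |V|` of the right parity: directly when
`2 * l ≤ |V|`, and otherwise as the complementary arc of a Hamiltonian cycle in which the two
ends are at cycle distance `|V| - l`.
-/

namespace SimpleGraph

variable {V : Type*} {G : SimpleGraph V}

/-- Adjacency of `u` and `v` would close a triangle, an odd closed walk. -/
lemma dist_eq_two_of_adj_of_adj (hG : G.Colorable 2) {u x v : V} (hux : G.Adj u x)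
    (hxv : G.Adj x v) (huv : u ≠ v) : G.dist u v = 2 := by
  have hnadj : ¬ G.Adj u v := fun h => by
    have := two_colorable_iff_forall_loop_even.mp hG u (.cons hux (.cons hxv (.cons h.symm .nil)))
    simp [Nat.even_add_one] at this
  have hedist : G.edist u v = 2 := edist_eq_two_iff.mpr ⟨huv, hnadj, x, hux, hxv.symm⟩
  simp [dist, hedist]

end SimpleGraph

open SimpleGraph

namespace Bipanpositionable

variable {V : Type*} [Fintype V] [DecidableEq V] {G : SimpleGraph V}

lemma even_card (hG : Bipanpositionable G) : Even (Fintype.card V) := by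
  obtain ⟨a, C, hC⟩ := hG.2.1
  simpa [hC.length_eq] using two_colorable_iff_forall_loop_even.mp hG.1 a C

/-- For `2 * l > |V|` the required path is the long arc of a Hamiltonian cycle in which `x`
and `y` are at cycle distance `|V| - l`. -/
lemma exists_isPath_length_eq (hG : Bipanpositionable G) {x y : V} (hxy : x ≠ y) {l : ℕ}
    (hl : G.dist x y ≤ l) (hlN : l + G.dist x y ≤ Fintype.card V)
    (hpar : Even (l - G.dist x y)) :
    ∃ p : G.Walk x y, p.IsPath ∧ p.length = l := by
  by_cases hshort : 2 * l ≤ Fintype.card V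
  · obtain ⟨p, -, hp, -, hpl, -⟩ := hG.2.2 x y hxy l hl hshort hpar
    exact ⟨p, hp, hpl⟩
  · have hpar' : Even (Fintype.card V - l - G.dist x y) := by
      have hN := hG.even_card
      rw [Nat.even_sub (by omega)] at hpar ⊢
      rw [Nat.even_sub (by omega)]
      simp_all
    obtain ⟨-, q, -, hq, -, hql, -⟩ :=
      hG.2.2 x y hxy (Fintype.card V - l) (by omega) (by omega) hpar'
    exact ⟨q, hq, by omega⟩

lemma exists_isPath_length_eq_of_adj (hG : Bipanpositionable G) {u w : V} (huw : G.Adj u w)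
    {l : ℕ} (hl : Odd l) (hlN : l < Fintype.card V) :
    ∃ p : G.Walk u w, p.IsPath ∧ p.length = l := by
  have hdist : G.dist u w = 1 := dist_eq_one_iff_adj.mpr huw
  obtain ⟨j, rfl⟩ := hl
  exact hG.exists_isPath_length_eq huw.ne (by omega) (by omega) ⟨j, by omega⟩

lemma exists_isPath_length_eq_of_dist_eq_two (hG : Bipanpositionable G) {u w : V}
    (huw : G.dist u w = 2) {l : ℕ} (hl : Even l) (hl₀ : 0 < l) (hlN : l < Fintype.card V) :
    ∃ p : G.Walk u w, p.IsPath ∧ p.length = l := by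
  have hne : u ≠ w := by rintro rfl; simp at huw
  obtain ⟨j, rfl⟩ := hl
  obtain ⟨m, hm⟩ := hG.even_card
  exact hG.exists_isPath_length_eq hne (by omega) (by omega) ⟨j - 1, by omega⟩

lemma exists_isPath_length_eq_of_adj_of_dist_eq_two (hG : Bipanpositionable G) {u w₁ w₂ : V}
    (hw₁ : G.Adj u w₁) (hw₂ : G.dist u w₂ = 2) {l : ℕ} (hl₀ : 0 < l)
    (hlN : l < Fintype.card V) :
    (∃ p : G.Walk u w₁, p.IsPath ∧ p.length = l) ∨
      ∃ p : G.Walk u w₂, p.IsPath ∧ p.length = l := by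
  rcases Nat.even_or_odd l with hl | hl
  · exact .inr (hG.exists_isPath_length_eq_of_dist_eq_two hw₂ hl hl₀ hlN)
  · exact .inl (hG.exists_isPath_length_eq_of_adj hw₁ hl hlN)

end Bipanpositionable

theorem four_cycle_path_closed_general {V : Type*} [Fintype V] [DecidableEq V]
    (G : SimpleGraph V) (hG : Bipanpositionable G)
    (a b c d : V)
    (hab : G.Adj a b) (hac : G.Adj a c) (hbd : G.Adj b d)
    (had : a ≠ d) (hbc : b ≠ c) :
    ∀ u ∈ ({a, b, c, d} : Set V), ∀ l : ℕ, 0 < l →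
      (∃ (v : V) (p : G.Walk u v), p.IsPath ∧ p.length = l) →
      ∃ x ∈ ({a, b, c, d} : Set V), ∃ p : G.Walk u x, p.IsPath ∧ p.length = l := by
  intro u hu l hl ⟨v, p₀, hp₀, hp₀l⟩
  have hlN : l < Fintype.card V := hp₀l ▸ hp₀.length_lt
  have had₂ : G.dist a d = 2 := dist_eq_two_of_adj_of_adj hG.1 hab hbd had
  have hbc₂ : G.dist b c = 2 := dist_eq_two_of_adj_of_adj hG.1 hab.symm hac hbc
  have hcb₂ : G.dist c b = 2 := dist_comm ▸ hbc₂
  have hda₂ : G.dist d a = 2 := dist_comm ▸ had₂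
  obtain ⟨w₁, hw₁, w₂, hw₂, huw₁, huw₂⟩ : ∃ w₁ ∈ ({a, b, c, d} : Set V),
      ∃ w₂ ∈ ({a, b, c, d} : Set V), G.Adj u w₁ ∧ G.dist u w₂ = 2 := by
    rcases hu with rfl | rfl | rfl | rfl
    · exact ⟨b, by simp, d, by simp, hab, had₂⟩
    · exact ⟨a, by simp, c, by simp, hab.symm, hbc₂⟩
    · exact ⟨a, by simp, b, by simp, hac.symm, hcb₂⟩
    · exact ⟨b, by simp, a, by simp, hbd.symm, hda₂⟩
  rcases hG.exists_isPath_length_eq_of_adj_of_dist_eq_two huw₁ huw₂ hl hlN with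
    ⟨p, hp, hpl⟩ | ⟨p, hp, hpl⟩
  · exact ⟨w₁, hw₁, p, hp, hpl⟩
  · exact ⟨w₂, hw₂, p, hp, hpl⟩

/-- A nonempty set `U` of vertices of `G` is *path-closed* when for every `u ∈ U`
and every positive `l`, if some vertex is reachable from `u` by a path of length `l`,
then some vertex of `U` is reachable from `u` by a path of length `l`. -/
theorem four_cycle_path_closed {V : Type*} [Fintype V] [DecidableEq V]
    (G : SimpleGraph V) (hG : Bipanpositionable G) (h4 : 4 ≤ Fintype.card V)
    (a b c d : V)
    (hab : G.Adj a b) (hac : G.Adj a c) (hbd : G.Adj b d) (hcd : G.Adj c d)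
    (had : a ≠ d) (hbc : b ≠ c) :
    ∀ u ∈ ({a, b, c, d} : Set V), ∀ l : ℕ, 0 < l →
      (∃ (v : V) (p : G.Walk u v), p.IsPath ∧ p.length = l) →
      ∃ x ∈ ({a, b, c, d} : Set V), ∃ p : G.Walk u x, p.IsPath ∧ p.length = l :=
  four_cycle_path_closed_general G hG a b c d hab hac hbd had hbc
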